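/- arXiv:1906.06325 — 3 statements merged into one kernel-verified Lean document; each statement's English description precedes it below -/
import Mathlib

section
/- Let (x_n) be a sequence of points in a δ-hyperbolic geodesic metric space such that for every n, d(x_{n+2}, x_n) ≥ max(d(x_{n+2}, x_{n+1}), d(x_{n+1}, x_n)) + 2δ + a for some constant a > 0. Then for all m, n, d(x_n, x_m) ≥ a·|m − n|. -/
/-- The four-point δ-hyperbolicity condition on a metric space. -/
def IsDeltaHyperbolic (X : Type*) [MetricSpace X] (δ : ℝ) : Prop :=
  ∀ x y z w : X,
    dist x y + dist z w ≤ max (dist x z + dist y w) (dist x w + dist y z) + 2 * δ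

/-- A geodesic metric space: any two points are joined by an isometrically
parametrized path. -/
def IsGeodesicSpace (X : Type*) [MetricSpace X] : Prop :=
  ∀ x y : X, ∃ f : ℝ → X, f 0 = x ∧ f (dist x y) = y ∧
    ∀ s ∈ Set.Icc (0 : ℝ) (dist x y), ∀ t ∈ Set.Icc (0 : ℝ) (dist x y),
      dist (f s) (f t) = |s - t|

/-- Delzant's lemma: if consecutive triples of a sequence in a δ-hyperbolic geodesic
space satisfy the gap condition with constant `a > 0`, then the sequence makes
linear progress: `d(x n, x m) ≥ a * |m - n|`. -/
theorem delzant_lemma {X : Type*} [MetricSpace X] {δ a : ℝ}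
    (hδ : 0 ≤ δ) (hhyp : IsDeltaHyperbolic X δ) (hgeo : IsGeodesicSpace X)
    (ha : 0 < a) (x : ℕ → X)
    (hgap : ∀ n : ℕ,
      max (dist (x (n + 2)) (x (n + 1))) (dist (x (n + 1)) (x n)) + 2 * δ + a
        ≤ dist (x (n + 2)) (x n)) :
    ∀ m n : ℕ, a * |(m : ℝ) - (n : ℝ)| ≤ dist (x n) (x m) := by
  -- Step: each increment gains at least `a`.
  have step : ∀ n k : ℕ, dist (x n) (x (n + k)) + a ≤ dist (x n) (x (n + k + 1)) := by
    intro n k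
    induction k with
    | zero =>
      have hg := hgap n
      have h1 : dist (x (n + 2)) (x (n + 1)) ≤
          max (dist (x (n + 2)) (x (n + 1))) (dist (x (n + 1)) (x n)) := le_max_left _ _
      have htri : dist (x (n + 2)) (x n) ≤
          dist (x (n + 2)) (x (n + 1)) + dist (x (n + 1)) (x n) := dist_triangle _ _ _
      have hc : dist (x (n + 1)) (x n) = dist (x n) (x (n + 1)) := dist_comm _ _
      simp only [Nat.add_zero, dist_self]
      linarith
    | succ k ih =>
      have hg := hgap (n + k)
      have hh := hhyp (x n) (x (n + k + 1)) (x (n + k)) (x (n + k + 2))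
      have hg1 : dist (x (n + k + 2)) (x (n + k + 1)) + 2 * δ + a ≤
          dist (x (n + k + 2)) (x (n + k)) := by
        have := le_max_left (dist (x (n + k + 2)) (x (n + k + 1)))
          (dist (x (n + k + 1)) (x (n + k)))
        have hg' : max (dist (x (n + k + 2)) (x (n + k + 1)))
            (dist (x (n + k + 1)) (x (n + k))) + 2 * δ + a
              ≤ dist (x (n + k + 2)) (x (n + k)) := by
          have := hgap (n + k)
          convert this using 4 <;> ring
        linarith
      have hg2 : dist (x (n + k + 1)) (x (n + k)) + 2 * δ + a ≤
          dist (x (n + k + 2)) (x (n + k)) := by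
        have := le_max_right (dist (x (n + k + 2)) (x (n + k + 1)))
          (dist (x (n + k + 1)) (x (n + k)))
        have hg' : max (dist (x (n + k + 2)) (x (n + k + 1)))
            (dist (x (n + k + 1)) (x (n + k))) + 2 * δ + a
              ≤ dist (x (n + k + 2)) (x (n + k)) := by
          have := hgap (n + k)
          convert this using 4 <;> ring
        linarith
      have hc1 : dist (x (n + k)) (x (n + k + 2)) = dist (x (n + k + 2)) (x (n + k)) :=
        dist_comm _ _
      have hc2 : dist (x (n + k + 1)) (x (n + k + 2)) = dist (x (n + k + 2)) (x (n + k + 1)) :=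
        dist_comm _ _
      have hc3 : dist (x (n + k + 1)) (x (n + k)) = dist (x (n + k)) (x (n + k + 1)) :=
        dist_comm _ _
      show dist (x n) (x (n + k + 1)) + a ≤ dist (x n) (x (n + k + 2))
      rcases max_cases (dist (x n) (x (n + k)) + dist (x (n + k + 1)) (x (n + k + 2)))
        (dist (x n) (x (n + k + 2)) + dist (x (n + k + 1)) (x (n + k))) with
        ⟨heq, _⟩ | ⟨heq, _⟩ <;> rw [heq] at hh <;> linarith
  -- Linear progress for forward indices.
  have main : ∀ n k : ℕ, a * k ≤ dist (x n) (x (n + k)) := by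
    intro n k
    induction k with
    | zero => simp
    | succ k ih =>
      have := step n k
      have hd : 0 ≤ dist (x n) (x (n + k)) := dist_nonneg
      push_cast
      have : a * k + a ≤ dist (x n) (x (n + k + 1)) := by linarith
      calc a * ((k : ℝ) + 1) = a * k + a := by ring
        _ ≤ dist (x n) (x (n + k + 1)) := this
  intro m n
  rcases le_total n m with h | h
  · obtain ⟨k, rfl⟩ := Nat.exists_eq_add_of_le h
    have habs : |((n + k : ℕ) : ℝ) - (n : ℝ)| = (k : ℝ) := by
      push_cast; rw [abs_of_nonneg] <;> [ring; linarith [Nat.cast_nonneg (α := ℝ) k]]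
    rw [habs]
    exact main n k
  · obtain ⟨k, rfl⟩ := Nat.exists_eq_add_of_le h
    have habs : |(m : ℝ) - ((m + k : ℕ) : ℝ)| = (k : ℝ) := by
      push_cast; rw [abs_of_nonpos] <;> [ring; linarith [Nat.cast_nonneg (α := ℝ) k]]
    rw [habs, dist_comm]
    exact main m k
end

section
/- Let a group G act by isometries on a metric space X, let v ∈ X, and let S ⊆ G be a set of elements each moving v distance at most D. Let g ∈ G and n ≥ 1 be such that for every sequence x₀ = v, x₁, x₂, … obtained by applying prefixes of a reduced word over {t g^{±n} : t ∈ S} to v, consecutive triples satisfy the Delzant gap condition with constant a = 10 in a δ-hyperbolic space. Then every nonempty reduced word w over {t g^{n}, t g^{-n} : t ∈ S} satisfies d(v, w·v) ≥ 10·(sum of the absolute exponents of g in w); in particular w ≠ 1 in G. -/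
/-- The letters of the syllable `t g^{k n}`: first `t·g^{±n}`, then `|k| - 1`
further copies of `g^{±n}` (the sign being the sign of `k`). -/
def syllableLetters {G : Type*} [Group G] (g : G) (n : ℕ) (p : G × ℤ) : List G :=
  (p.1 * g ^ (p.2.sign * (n : ℤ))) ::
    List.replicate (p.2.natAbs - 1) (g ^ (p.2.sign * (n : ℤ)))

/-- The list of letters of the word `t₁ g^{k₁ n} t₂ g^{k₂ n} ⋯ t_s g^{k_s n}`
encoded as the list of pairs `(tᵢ, kᵢ)`. -/
def wordLetters {G : Type*} [Group G] (g : G) (n : ℕ) (w : List (G × ℤ)) : List G :=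
  (w.map (syllableLetters g n)).flatten

/-- `w` encodes a reduced word `t₁ g^{k₁ n} ⋯ t_s g^{k_s n}` over
`{t g^{±n} : t ∈ S}`: all `tᵢ ∈ S`, `kᵢ ≠ 0`, and for `i > 1` either `tᵢ ≠ 1` or
`k_{i-1}` and `kᵢ` have the same sign. -/
def IsReducedWord {G : Type*} [Group G] (S : Set G) (w : List (G × ℤ)) : Prop :=
  (∀ p ∈ w, p.1 ∈ S ∧ p.2 ≠ 0) ∧
    ∀ i : ℕ, (h : i + 1 < w.length) →
      (w.get ⟨i + 1, h⟩).1 ≠ 1 ∨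
        0 < (w.get ⟨i, Nat.lt_of_succ_lt h⟩).2 * (w.get ⟨i + 1, h⟩).2

lemma delzant_step {X : Type*} [MetricSpace X] (δ : ℝ) (hδ : 0 ≤ δ)
    (hhyp : IsDeltaHyperbolic X δ) (x : ℕ → X) (N : ℕ) (hN : 2 ≤ N)
    (hgap : ∀ j : ℕ, j + 2 ≤ N →
      max (dist (x (j+2)) (x (j+1))) (dist (x (j+1)) (x j)) + 2*δ + 10 ≤ dist (x (j+2)) (x j)) :
    ∀ m : ℕ, m + 1 ≤ N → dist (x 0) (x m) + 10 ≤ dist (x 0) (x (m+1)) := by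
  intro m
  induction m with
  | zero =>
    intro _
    have hg := hgap 0 (by omega)
    simp only [Nat.reduceAdd, Nat.zero_add] at hg ⊢
    have ht : dist (x 2) (x 0) ≤ dist (x 2) (x 1) + dist (x 1) (x 0) := dist_triangle _ _ _
    have h1 : dist (x 2) (x 1) ≤ max (dist (x 2) (x 1)) (dist (x 1) (x 0)) := le_max_left _ _
    have h2 : dist (x 0) (x 1) = dist (x 1) (x 0) := dist_comm _ _
    have h3 : dist (x 0) (x 0) = 0 := dist_self _
    linarith
  | succ m ih =>
    intro h
    show dist (x 0) (x (m+1)) + 10 ≤ dist (x 0) (x (m+2))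
    have hB := ih (by omega)
    have hg := hgap m (by omega)
    have hq : dist (x (m+2)) (x (m+1)) ≤ max (dist (x (m+2)) (x (m+1))) (dist (x (m+1)) (x m)) :=
      le_max_left _ _
    have hp : dist (x (m+1)) (x m) ≤ max (dist (x (m+2)) (x (m+1))) (dist (x (m+1)) (x m)) :=
      le_max_right _ _
    have hhy := hhyp (x 0) (x (m+1)) (x m) (x (m+2))
    have c1 : dist (x m) (x (m+2)) = dist (x (m+2)) (x m) := dist_comm _ _
    have c2 : dist (x (m+1)) (x (m+2)) = dist (x (m+2)) (x (m+1)) := dist_comm _ _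
    rcases le_total (dist (x 0) (x m) + dist (x (m+1)) (x (m+2)))
        (dist (x 0) (x (m+2)) + dist (x (m+1)) (x m)) with hcase | hcase
    · rw [max_eq_right hcase] at hhy
      linarith
    · rw [max_eq_left hcase] at hhy
      linarith

lemma delzant {X : Type*} [MetricSpace X] (δ : ℝ) (hδ : 0 ≤ δ)
    (hhyp : IsDeltaHyperbolic X δ) (x : ℕ → X) (N : ℕ) (hN : 2 ≤ N)
    (hgap : ∀ j : ℕ, j + 2 ≤ N →
      max (dist (x (j+2)) (x (j+1))) (dist (x (j+1)) (x j)) + 2*δ + 10 ≤ dist (x (j+2)) (x j)) :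
    ∀ m : ℕ, m ≤ N → 10 * (m : ℝ) ≤ dist (x 0) (x m) := by
  intro m
  induction m with
  | zero => intro _; simp
  | succ m ih =>
    intro h
    have h1 := delzant_step δ hδ hhyp x N hN hgap m (by omega)
    have h2 := ih (by omega)
    push_cast
    linarith

lemma length_wordLetters {G : Type*} [Group G] (g : G) (n : ℕ) (w : List (G × ℤ))
    (hw : ∀ p ∈ w, p.2 ≠ 0) :
    (wordLetters g n w).length = (w.map (fun p => p.2.natAbs)).sum := by
  induction w with
  | nil => simp [wordLetters]
  | cons p rest ih =>
    have h1 : p.2.natAbs ≠ 0 := Int.natAbs_ne_zero.mpr (hw p (by simp))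
    have := ih (fun q hq => hw q (by simp [hq]))
    simp only [wordLetters, List.map_cons, List.flatten_cons, List.length_append,
      List.map_cons, List.sum_cons, syllableLetters, List.length_cons, List.length_replicate]
    simp only [wordLetters] at this
    omega

/-- If every sequence of points obtained by applying the prefixes of a reduced
word over `{t g^{±n} : t ∈ S}` to the basepoint `v` satisfies the Delzant gap
condition with constant `a = 10` in the δ-hyperbolic geodesic space `X`, then any
nonempty reduced word `w` moves `v` a distance at least `10·Σ|kᵢ|`; in particular
`w ≠ 1` in `G`. -/
theorem reduced_words_make_progress {G X : Type*} [Group G] [MetricSpace X]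
    [MulAction G X]
    (hiso : ∀ (a : G) (x y : X), dist (a • x) (a • y) = dist x y)
    (δ : ℝ) (hδ : 0 ≤ δ) (hhyp : IsDeltaHyperbolic X δ) (hgeo : IsGeodesicSpace X)
    (v : X) (S : Set G) (D : ℝ) (hS : ∀ t ∈ S, dist v (t • v) ≤ D)
    (g : G) (n : ℕ) (hn : 1 ≤ n)
    (hgap : ∀ w : List (G × ℤ), IsReducedWord S w →
      ∀ j : ℕ, j + 2 ≤ (wordLetters g n w).length →
        max (dist ((((wordLetters g n w).take (j + 2)).prod) • v)
               ((((wordLetters g n w).take (j + 1)).prod) • v))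
            (dist ((((wordLetters g n w).take (j + 1)).prod) • v)
               ((((wordLetters g n w).take j).prod) • v))
          + 2 * δ + 10
        ≤ dist ((((wordLetters g n w).take (j + 2)).prod) • v)
            ((((wordLetters g n w).take j).prod) • v)) :
    ∀ w : List (G × ℤ), IsReducedWord S w → w ≠ [] →
      10 * ((w.map (fun p => p.2.natAbs)).sum : ℝ)
          ≤ dist v ((wordLetters g n w).prod • v) ∧
      (wordLetters g n w).prod ≠ 1 := by
  intro w hred hne
  have hk : ∀ p ∈ w, p.2 ≠ 0 := fun p hp => (hred.1 p hp).2
  have hlen := length_wordLetters g n w hk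
  set L := (wordLetters g n w).length with hL
  have hL1 : 1 ≤ L := by
    cases w with
    | nil => exact absurd rfl hne
    | cons p rest =>
      simp [hL, wordLetters, syllableLetters]
  have key : 10 * (L : ℝ) ≤ dist v ((wordLetters g n w).prod • v) := by
    rcases Nat.lt_or_ge L 2 with hc | hc
    · -- L = 1 : w is a single syllable with |k| = 1
      have hLeq : L = 1 := by omega
      obtain ⟨t, k, hw, hk1⟩ : ∃ t k, w = [(t, k)] ∧ k.natAbs = 1 := by
        cases w with
        | nil => exact absurd rfl hne
        | cons p rest =>
          cases rest with
          | nil =>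
            refine ⟨p.1, p.2, by simp, ?_⟩
            rw [hLeq] at hlen
            simpa using hlen.symm
          | cons q r =>
            exfalso
            rw [hLeq] at hlen
            have h1 : p.2.natAbs ≠ 0 := Int.natAbs_ne_zero.mpr (hk p (by simp))
            have h2 : q.2.natAbs ≠ 0 := Int.natAbs_ne_zero.mpr (hk q (by simp))
            simp only [List.map_cons, List.sum_cons] at hlen
            omega
      subst hw
      have htS : t ∈ S := (hred.1 (t, k) (by simp)).1
      set w' : List (G × ℤ) := [(t, 2 * k)] with hw'
      have hred' : IsReducedWord S w' := by
        constructor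
        · intro q hq
          simp only [hw', List.mem_singleton] at hq
          subst hq
          refine ⟨htS, ?_⟩
          have : k ≠ 0 := hk (t, k) (by simp)
          simp only [ne_eq, mul_eq_zero]
          omega
        · intro i hi
          simp [hw'] at hi
      have hsign : (2 * k).sign = k.sign := by
        rcases Int.natAbs_eq_iff.mp hk1 with h | h <;> simp [h] <;> decide
      have hlets' : wordLetters g n w' =
          [t * g ^ (k.sign * (n : ℤ)), g ^ (k.sign * (n : ℤ))] := by
        have hab : (2 * k).natAbs = 2 := by omega
        simp [hw', wordLetters, syllableLetters, hab, hsign, List.replicate]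
      have hlets : wordLetters g n [(t, k)] = [t * g ^ (k.sign * (n : ℤ))] := by
        simp [wordLetters, syllableLetters, hk1]
      have hg := hgap w' hred' 0 (by rw [hlets']; simp)
      rw [hlets'] at hg
      simp only [List.take, List.prod_cons, List.prod_nil, mul_one, one_smul,
        List.take_zero, List.take_succ_cons, List.take_nil] at hg
      rw [hLeq, hlets]
      simp only [List.prod_cons, List.prod_nil, mul_one]
      set a := t * g ^ (k.sign * (n : ℤ)) with ha
      set b := g ^ (k.sign * (n : ℤ)) with hb
      have ht : dist ((a * b) • v) v ≤ dist ((a * b) • v) (a • v) + dist (a • v) v :=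
        dist_triangle _ _ _
      have h1 : dist ((a * b) • v) (a • v) ≤
          max (dist ((a * b) • v) (a • v)) (dist (a • v) v) := le_max_left _ _
      have h2 : dist v (a • v) = dist (a • v) v := dist_comm _ _
      push_cast
      linarith
    · -- L ≥ 2 : Delzant's lemma applies directly
      have hd := delzant δ hδ hhyp (fun j => ((wordLetters g n w).take j).prod • v) L hc
        (hgap w hred) L le_rfl
      simpa [hL, List.take_length] using hd
  constructor
  · rw [hlen] at key
    rw [show ((w.map (fun p => (p.2.natAbs : ℝ))).sum) =
        (((w.map (fun p => p.2.natAbs)).sum : ℕ) : ℝ) by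
      push_cast [List.map_map]
      rfl]
    exact key
  · intro hcon
    rw [hcon, one_smul, dist_self] at key
    have : (1 : ℝ) ≤ (L : ℝ) := by exact_mod_cast hL1
    linarith
end

section
/- Let G be a Garside group with Garside element Δ and let y ∈ G be absorbable (inf(y) = 0 or sup(y) = 0, and there exists x with inf(xy) = inf(x) and sup(xy) = sup(x)). Then y^{-1} is also absorbable. -/
/-- A Garside structure on a group `G`: a submonoid `pos` of positive elements with
`pos ∩ pos⁻¹ = {1}`, a Garside element `Δ ∈ pos` with `Δ⁻¹ pos Δ = pos`, together
with the infimum and supremum functions determined by the prefix order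
`a ≼ b ↔ a⁻¹b ∈ pos`: `ginf x = max {p : Δᵖ ≼ x}` and `gsup x = min {p : x ≼ Δᵖ}`. -/
structure GarsideStructure (G : Type*) [Group G] where
  pos : Submonoid G
  Δ : G
  delta_pos : Δ ∈ pos
  inter_trivial : ∀ a : G, a ∈ pos → a⁻¹ ∈ pos → a = 1
  conj_mem : ∀ a : G, a ∈ pos → Δ⁻¹ * a * Δ ∈ pos
  conj_mem' : ∀ a : G, a ∈ pos → Δ * a * Δ⁻¹ ∈ pos
  ginf : G → ℤ
  gsup : G → ℤ
  ginf_spec : ∀ (x : G) (p : ℤ), ((Δ ^ p)⁻¹ * x ∈ pos ↔ p ≤ ginf x)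
  gsup_spec : ∀ (x : G) (p : ℤ), (x⁻¹ * Δ ^ p ∈ pos ↔ gsup x ≤ p)

/-- `y` is absorbable if `inf(y) = 0` or `sup(y) = 0`, and some `x` absorbs `y`,
i.e. `inf(xy) = inf(x)` and `sup(xy) = sup(x)`. -/
def GarsideStructure.Absorbable {G : Type*} [Group G] (S : GarsideStructure G)
    (y : G) : Prop :=
  (S.ginf y = 0 ∨ S.gsup y = 0) ∧
    ∃ x : G, S.ginf (x * y) = S.ginf x ∧ S.gsup (x * y) = S.gsup x

/-! Conjugation by `Δ` preserves positivity, so `Δ ^ p ≼ y⁻¹` iff `y ≼ Δ ^ (-p)`. Hence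
`inf(y⁻¹) = -sup(y)` and `sup(y⁻¹) = -inf(y)`, and if `x` absorbs `y` then `xy` absorbs `y⁻¹`,
because `(xy)y⁻¹ = x`. -/

namespace GarsideStructure

variable {G : Type*} [Group G] (S : GarsideStructure G)

theorem conj_mem_iff (a : G) : S.Δ * a * S.Δ⁻¹ ∈ S.pos ↔ a ∈ S.pos :=
  ⟨fun h => by simpa [mul_assoc] using S.conj_mem _ h, S.conj_mem' a⟩

theorem zpow_conj_mem_iff (k : ℤ) (a : G) :
    S.Δ ^ k * a * (S.Δ ^ k)⁻¹ ∈ S.pos ↔ a ∈ S.pos := by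
  induction k using Int.induction_on generalizing a with
  | zero => simp
  | succ n ih =>
    rw [← ih a, ← S.conj_mem_iff (S.Δ ^ (n : ℤ) * a * (S.Δ ^ (n : ℤ))⁻¹)]
    congr! 1
    group
  | pred n ih =>
    rw [← ih a, ← S.conj_mem_iff (S.Δ ^ (-(n : ℤ) - 1) * a * (S.Δ ^ (-(n : ℤ) - 1))⁻¹)]
    congr! 1
    group

theorem le_ginf_inv_iff (y : G) (p : ℤ) : p ≤ S.ginf y⁻¹ ↔ S.gsup y ≤ -p := by
  rw [← S.ginf_spec, ← S.gsup_spec, ← S.zpow_conj_mem_iff (-p) (y⁻¹ * S.Δ ^ (-p))]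
  congr! 1
  group

theorem ginf_inv (y : G) : S.ginf y⁻¹ = -S.gsup y :=
  eq_of_forall_le_iff fun p => (S.le_ginf_inv_iff y p).trans le_neg

theorem gsup_inv (y : G) : S.gsup y⁻¹ = -S.ginf y := by
  rw [← neg_neg (S.gsup y⁻¹), ← S.ginf_inv, inv_inv]

end GarsideStructure

/-- Calvez–Wiest: the inverse of an absorbable element is absorbable. -/
theorem absorbable_inv {G : Type*} [Group G] (S : GarsideStructure G) (y : G)
    (hy : S.Absorbable y) : S.Absorbable y⁻¹ := by
  obtain ⟨hzero, x, hinf, hsup⟩ := hy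
  refine ⟨?_, x * y, ?_, ?_⟩
  · rw [S.ginf_inv, S.gsup_inv, neg_eq_zero, neg_eq_zero]
    exact hzero.symm
  · rw [mul_inv_cancel_right, hinf]
  · rw [mul_inv_cancel_right, hsup]
end
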